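/- There exists a unique antiautomorphism † of the 𝔽-algebra U_q(𝔰𝔩₂) (an 𝔽-linear bijection with †(uv) = †(v)†(u) for all u, v) that fixes each of A, y, y⁻¹; this antiautomorphism sends x ↦ Z, y^{±1} ↦ y^{±1}, z ↦ X, and satisfies †² = 1. -/

import Mathlib

namespace Paper


/-- Generators for the equitable presentation of `U_q(sl2)`: `x`, `y`, `y⁻¹`, `z`. -/
inductive EqGen : Type
  | x | y | y' | z

/-- The defining relations of the equitable presentation of `U_q(sl2)`. -/
inductive EqRel (F : Type*) [Field F] (q : F) :
    FreeAlgebra F EqGen → FreeAlgebra F EqGen → Prop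
  | yy' : EqRel F q (FreeAlgebra.ι F EqGen.y * FreeAlgebra.ι F EqGen.y') 1
  | y'y : EqRel F q (FreeAlgebra.ι F EqGen.y' * FreeAlgebra.ι F EqGen.y) 1
  | xy : EqRel F q
      (q • (FreeAlgebra.ι F EqGen.x * FreeAlgebra.ι F EqGen.y)
        - q⁻¹ • (FreeAlgebra.ι F EqGen.y * FreeAlgebra.ι F EqGen.x))
      ((q - q⁻¹) • (1 : FreeAlgebra F EqGen))
  | yz : EqRel F q
      (q • (FreeAlgebra.ι F EqGen.y * FreeAlgebra.ι F EqGen.z)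
        - q⁻¹ • (FreeAlgebra.ι F EqGen.z * FreeAlgebra.ι F EqGen.y))
      ((q - q⁻¹) • (1 : FreeAlgebra F EqGen))
  | zx : EqRel F q
      (q • (FreeAlgebra.ι F EqGen.z * FreeAlgebra.ι F EqGen.x)
        - q⁻¹ • (FreeAlgebra.ι F EqGen.x * FreeAlgebra.ι F EqGen.z))
      ((q - q⁻¹) • (1 : FreeAlgebra F EqGen))

/-- `U_q(sl2)` in its equitable presentation. -/
abbrev Usl2 (F : Type*) [Field F] (q : F) := RingQuot (EqRel F q)

noncomputable def ux (F : Type*) [Field F] (q : F) : Usl2 F q :=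
  RingQuot.mkAlgHom F (EqRel F q) (FreeAlgebra.ι F EqGen.x)

noncomputable def uy (F : Type*) [Field F] (q : F) : Usl2 F q :=
  RingQuot.mkAlgHom F (EqRel F q) (FreeAlgebra.ι F EqGen.y)

noncomputable def uy' (F : Type*) [Field F] (q : F) : Usl2 F q :=
  RingQuot.mkAlgHom F (EqRel F q) (FreeAlgebra.ι F EqGen.y')

noncomputable def uz (F : Type*) [Field F] (q : F) : Usl2 F q :=
  RingQuot.mkAlgHom F (EqRel F q) (FreeAlgebra.ι F EqGen.z)

/-- `X = a⁻²x + (1 − a⁻²)y⁻¹`. -/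
noncomputable def uX (F : Type*) [Field F] (q a : F) : Usl2 F q :=
  (a ^ 2)⁻¹ • ux F q + (1 - (a ^ 2)⁻¹) • uy' F q

/-- `Z = a²z + (1 − a²)y⁻¹`. -/
noncomputable def uZ (F : Type*) [Field F] (q a : F) : Usl2 F q :=
  a ^ 2 • uz F q + (1 - a ^ 2) • uy' F q

/-- `A = a⁻¹x + az`. -/
noncomputable def uA (F : Type*) [Field F] (q a : F) : Usl2 F q :=
  a⁻¹ • ux F q + a • uz F q

/-- `U_q^∨`, the subalgebra of `U_q(sl2)` generated by `x`, `y⁻¹`, `z`. -/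
noncomputable def Uvee (F : Type*) [Field F] (q : F) : Subalgebra F (Usl2 F q) :=
  Algebra.adjoin F {ux F q, uy' F q, uz F q}


/-! The elements `Z, y, y⁻¹, X` satisfy the defining relations of `x, y, y⁻¹, z` in the opposite
algebra: besides those relations, `[Z, X]_q` needs `[z, y⁻¹]_q = [y⁻¹, x]_q = (q - q⁻¹) y⁻²`,
obtained by conjugating `[y, z]_q` and `[x, y]_q` with `y⁻¹`. So `x ↦ Z, y^{±1} ↦ y^{±1}, z ↦ X`
extends to an antiautomorphism `†`; it fixes `A = aX + a⁻¹Z`, and `† Z = x`, `† X = z` make it an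
involution. Conversely, for an antiautomorphism `d` fixing `A` and `y^{±1}`, put `w = d x - Z`:
the relations give `[y, w]_q = 0` and `[d z - X, y]_q = 0`, fixing `A` gives `d z - X = -a⁻² w`,
and an element `q`-commuting with the unit `y` from both sides vanishes when `q⁴ ≠ 1`. -/

section QComm

variable {F B C : Type*} [Field F] [Ring B] [Algebra F B] [Ring C] [Algebra F C] (q : F)

/-- The `q`-commutator `[u, v]_q`; the equitable relations read
`[x, y]_q = [y, z]_q = [z, x]_q = q - q⁻¹`. -/
def qComm (u v : B) : B := q • (u * v) - q⁻¹ • (v * u)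

variable {q}

lemma qComm_add_left (u v w : B) : qComm q (u + v) w = qComm q u w + qComm q v w := by
  simp only [qComm, add_mul, mul_add]; module

lemma qComm_add_right (u v w : B) : qComm q u (v + w) = qComm q u v + qComm q u w := by
  simp only [qComm, add_mul, mul_add]; module

lemma qComm_sub_left (u v w : B) : qComm q (u - v) w = qComm q u w - qComm q v w := by
  simp only [qComm, sub_mul, mul_sub]; module

lemma qComm_sub_right (u v w : B) : qComm q u (v - w) = qComm q u v - qComm q u w := by
  simp only [qComm, sub_mul, mul_sub]; module

lemma qComm_smul_left (c : F) (u v : B) : qComm q (c • u) v = c • qComm q u v := by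
  simp only [qComm, smul_mul_assoc, mul_smul_comm]; module

lemma qComm_smul_right (c : F) (u v : B) : qComm q u (c • v) = c • qComm q u v := by
  simp only [qComm, smul_mul_assoc, mul_smul_comm]; module

lemma qComm_self (u : B) : qComm q u u = (q - q⁻¹) • (u * u) := by
  rw [qComm, sub_smul]

lemma qComm_eq_of_mul_eq_one {y y' : B} (hyy' : y * y' = 1) (hy'y : y' * y = 1) :
    qComm q y y' = (q - q⁻¹) • 1 := by
  rw [qComm, hyy', hy'y, sub_smul]

lemma op_qComm (u v : B) :
    MulOpposite.op (qComm q u v) = qComm q (MulOpposite.op v) (MulOpposite.op u) := by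
  simp only [qComm, MulOpposite.op_sub, MulOpposite.op_smul, MulOpposite.op_mul]

lemma map_qComm_of_antimul (d : B →ₗ[F] C) (hd : ∀ u v, d (u * v) = d v * d u) (u v : B) :
    d (qComm q u v) = qComm q (d v) (d u) := by
  simp only [qComm, map_sub, map_smul, hd]

lemma mul_qComm_left_mul {y y' : B} (hyy' : y * y' = 1) (hy'y : y' * y = 1) (u : B) :
    y' * qComm q y u * y' = qComm q u y' := by
  simp only [qComm, mul_sub, sub_mul, mul_smul_comm, smul_mul_assoc, ← mul_assoc, hy'y, one_mul]
  simp only [mul_assoc, hyy', mul_one]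

lemma mul_qComm_right_mul {y y' : B} (hyy' : y * y' = 1) (hy'y : y' * y = 1) (u : B) :
    y' * qComm q u y * y' = qComm q y' u := by
  simp only [qComm, mul_sub, sub_mul, mul_smul_comm, smul_mul_assoc, ← mul_assoc, hy'y, one_mul]
  simp only [mul_assoc, hyy', mul_one]

/-- The two relations give `q • y w = q⁻¹ • w y = q⁻³ • y w`, and `q ≠ q⁻³`. -/
lemma eq_zero_of_qComm_eq_zero (hq0 : q ≠ 0) (hq4 : q ^ 4 ≠ 1) {y w : B} (hy : IsUnit y)
    (hyw : qComm q y w = 0) (hwy : qComm q w y = 0) : w = 0 := by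
  have hcomm : w * y = q ^ 2 • (y * w) := by
    have h := congrArg (q • ·) hyw
    simp only [qComm, smul_sub, smul_smul, smul_zero, mul_inv_cancel₀ hq0, one_smul] at h
    rw [← sub_eq_zero.mp h, sq]
  have hcoef : q ^ 3 - q⁻¹ ≠ 0 := by
    rw [sub_ne_zero]
    intro h
    apply hq4
    calc q ^ 4 = q * q ^ 3 := by ring
      _ = 1 := by rw [h, mul_inv_cancel₀ hq0]
  have hyw0 : (q ^ 3 - q⁻¹) • (y * w) = 0 := by
    rw [qComm, hcomm, smul_smul] at hwy
    rw [← hwy]; module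
  exact (hy.mul_right_eq_zero).mp ((smul_eq_zero.mp hyw0).resolve_left hcoef)

end QComm

section Relations

variable {F : Type*} [Field F] {q a : F}

lemma uy_mul_uy' : uy F q * uy' F q = 1 := by
  have h := RingQuot.mkAlgHom_rel F (EqRel.yy' (F := F) (q := q))
  simp only [map_mul, map_one] at h
  exact h

lemma uy'_mul_uy : uy' F q * uy F q = 1 := by
  have h := RingQuot.mkAlgHom_rel F (EqRel.y'y (F := F) (q := q))
  simp only [map_mul, map_one] at h
  exact h

lemma isUnit_uy : IsUnit (uy F q) :=
  ⟨⟨uy F q, uy' F q, uy_mul_uy', uy'_mul_uy⟩, rfl⟩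

lemma qComm_ux_uy : qComm q (ux F q) (uy F q) = (q - q⁻¹) • 1 := by
  have h := RingQuot.mkAlgHom_rel F (EqRel.xy (F := F) (q := q))
  simp only [map_sub, map_smul, map_mul, map_one] at h
  exact h

lemma qComm_uy_uz : qComm q (uy F q) (uz F q) = (q - q⁻¹) • 1 := by
  have h := RingQuot.mkAlgHom_rel F (EqRel.yz (F := F) (q := q))
  simp only [map_sub, map_smul, map_mul, map_one] at h
  exact h

lemma qComm_uz_ux : qComm q (uz F q) (ux F q) = (q - q⁻¹) • 1 := by
  have h := RingQuot.mkAlgHom_rel F (EqRel.zx (F := F) (q := q))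
  simp only [map_sub, map_smul, map_mul, map_one] at h
  exact h

lemma qComm_uy_uy' : qComm q (uy F q) (uy' F q) = (q - q⁻¹) • 1 :=
  qComm_eq_of_mul_eq_one uy_mul_uy' uy'_mul_uy

lemma qComm_uy'_uy : qComm q (uy' F q) (uy F q) = (q - q⁻¹) • 1 :=
  qComm_eq_of_mul_eq_one uy'_mul_uy uy_mul_uy'

lemma qComm_uz_uy' : qComm q (uz F q) (uy' F q) = (q - q⁻¹) • (uy' F q * uy' F q) := by
  rw [← mul_qComm_left_mul uy_mul_uy' uy'_mul_uy, qComm_uy_uz, mul_smul_comm, smul_mul_assoc,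
    mul_one]

lemma qComm_uy'_ux : qComm q (uy' F q) (ux F q) = (q - q⁻¹) • (uy' F q * uy' F q) := by
  rw [← mul_qComm_right_mul uy_mul_uy' uy'_mul_uy, qComm_ux_uy, mul_smul_comm, smul_mul_assoc,
    mul_one]

lemma qComm_uy_uZ : qComm q (uy F q) (uZ F q a) = (q - q⁻¹) • 1 := by
  rw [uZ, qComm_add_right, qComm_smul_right, qComm_smul_right, qComm_uy_uz, qComm_uy_uy']
  module

lemma qComm_uX_uy : qComm q (uX F q a) (uy F q) = (q - q⁻¹) • 1 := by
  rw [uX, qComm_add_left, qComm_smul_left, qComm_smul_left, qComm_ux_uy, qComm_uy'_uy]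
  module

lemma qComm_uZ_uX (ha0 : a ≠ 0) : qComm q (uZ F q a) (uX F q a) = (q - q⁻¹) • 1 := by
  have ha2 : a ^ 2 ≠ 0 := pow_ne_zero 2 ha0
  rw [uZ, uX]
  simp only [qComm_add_left, qComm_add_right, qComm_smul_left, qComm_smul_right, qComm_uz_ux,
    qComm_uz_uy', qComm_uy'_ux, qComm_self, smul_smul]
  match_scalars <;> field_simp
  ring

lemma uA_eq (ha0 : a ≠ 0) : uA F q a = a • uX F q a + a⁻¹ • uZ F q a := by
  rw [uA, uX, uZ]
  match_scalars <;> field_simp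
  ring

lemma ux_eq (ha0 : a ≠ 0) : ux F q = a ^ 2 • uX F q a + (1 - a ^ 2) • uy' F q := by
  rw [uX]
  match_scalars <;> field_simp
  ring

lemma uz_eq (ha0 : a ≠ 0) : uz F q = (a ^ 2)⁻¹ • uZ F q a + (1 - (a ^ 2)⁻¹) • uy' F q := by
  rw [uZ]
  match_scalars <;> field_simp
  ring

end Relations

namespace Usl2

variable {F : Type*} [Field F] {q : F}

@[elab_as_elim]
lemma induction {P : Usl2 F q → Prop} (algebraMap : ∀ c : F, P (algebraMap F (Usl2 F q) c))
    (ux : P (ux F q)) (uy : P (uy F q)) (uy' : P (uy' F q)) (uz : P (uz F q))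
    (add : ∀ u v, P u → P v → P (u + v)) (mul : ∀ u v, P u → P v → P (u * v)) (u : Usl2 F q) :
    P u := by
  obtain ⟨v, rfl⟩ := RingQuot.mkAlgHom_surjective F (EqRel F q) u
  induction v using FreeAlgebra.induction with
  | grade0 c => rw [AlgHom.commutes]; exact algebraMap c
  | grade1 g => cases g <;> assumption
  | mul u v hu hv => rw [map_mul]; exact mul _ _ hu hv
  | add u v hu hv => rw [map_add]; exact add _ _ hu hv

variable {B : Type*} [Ring B] [Algebra F B]

lemma linearMap_ext_of_antimul {f g : Usl2 F q →ₗ[F] B}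
    (hf : ∀ u v, f (u * v) = f v * f u) (hg : ∀ u v, g (u * v) = g v * g u) (h1 : f 1 = g 1)
    (hx : f (ux F q) = g (ux F q)) (hy : f (uy F q) = g (uy F q))
    (hy' : f (uy' F q) = g (uy' F q)) (hz : f (uz F q) = g (uz F q)) : f = g := by
  ext u
  induction u using Usl2.induction with
  | algebraMap c => simp only [Algebra.algebraMap_eq_smul_one, map_smul, h1]
  | add u v hu hv => rw [map_add, map_add, hu, hv]
  | mul u v hu hv => rw [hf, hg, hu, hv]
  | _ => assumption

section Lift

variable (q) (x y y' z : B) (hyy' : y * y' = 1) (hy'y : y' * y = 1)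
  (hxy : qComm q x y = (q - q⁻¹) • 1) (hyz : qComm q y z = (q - q⁻¹) • 1)
  (hzx : qComm q z x = (q - q⁻¹) • 1)

noncomputable def lift : Usl2 F q →ₐ[F] B :=
  RingQuot.liftAlgHom F ⟨FreeAlgebra.lift F fun
      | .x => x | .y => y | .y' => y' | .z => z, by
    rintro _ _ ⟨⟩ <;> simp only [map_sub, map_smul, map_mul, map_one, FreeAlgebra.lift_ι_apply]
    exacts [hyy', hy'y, hxy, hyz, hzx]⟩

lemma lift_ux : lift q x y y' z hyy' hy'y hxy hyz hzx (ux F q) = x := by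
  rw [lift, ux, RingQuot.liftAlgHom_mkAlgHom_apply, FreeAlgebra.lift_ι_apply]

lemma lift_uy : lift q x y y' z hyy' hy'y hxy hyz hzx (uy F q) = y := by
  rw [lift, uy, RingQuot.liftAlgHom_mkAlgHom_apply, FreeAlgebra.lift_ι_apply]

lemma lift_uy' : lift q x y y' z hyy' hy'y hxy hyz hzx (uy' F q) = y' := by
  rw [lift, uy', RingQuot.liftAlgHom_mkAlgHom_apply, FreeAlgebra.lift_ι_apply]

lemma lift_uz : lift q x y y' z hyy' hy'y hxy hyz hzx (uz F q) = z := by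
  rw [lift, uz, RingQuot.liftAlgHom_mkAlgHom_apply, FreeAlgebra.lift_ι_apply]

end Lift

end Usl2

section Dagger

variable {F : Type*} [Field F] {q a : F}

open MulOpposite

variable (q) in
noncomputable def daggerHom (ha0 : a ≠ 0) : Usl2 F q →ₐ[F] (Usl2 F q)ᵐᵒᵖ :=
  Usl2.lift q (op (uZ F q a)) (op (uy F q)) (op (uy' F q)) (op (uX F q a))
    (by rw [← op_mul, uy'_mul_uy, op_one]) (by rw [← op_mul, uy_mul_uy', op_one])
    (by rw [← op_qComm, qComm_uy_uZ, op_smul, op_one])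
    (by rw [← op_qComm, qComm_uX_uy, op_smul, op_one])
    (by rw [← op_qComm, qComm_uZ_uX ha0, op_smul, op_one])

variable (q) in
noncomputable def dagger (ha0 : a ≠ 0) : Usl2 F q →ₗ[F] Usl2 F q :=
  (opLinearEquiv F).symm.toLinearMap ∘ₗ (daggerHom q ha0).toLinearMap

variable (ha0 : a ≠ 0)

lemma dagger_apply (u : Usl2 F q) : dagger q ha0 u = (daggerHom q ha0 u).unop := rfl

lemma dagger_mul (u v : Usl2 F q) : dagger q ha0 (u * v) = dagger q ha0 v * dagger q ha0 u := by
  simp only [dagger_apply, map_mul, unop_mul]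

lemma dagger_algebraMap (c : F) :
    dagger q ha0 (algebraMap F (Usl2 F q) c) = algebraMap F (Usl2 F q) c := by
  rw [dagger_apply, AlgHom.commutes, MulOpposite.algebraMap_apply, unop_op]

lemma dagger_one : dagger q ha0 1 = 1 := by
  rw [dagger_apply, map_one, unop_one]

lemma dagger_ux : dagger q ha0 (ux F q) = uZ F q a := by
  rw [dagger_apply, daggerHom, Usl2.lift_ux, unop_op]

lemma dagger_uy : dagger q ha0 (uy F q) = uy F q := by
  rw [dagger_apply, daggerHom, Usl2.lift_uy, unop_op]

lemma dagger_uy' : dagger q ha0 (uy' F q) = uy' F q := by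
  rw [dagger_apply, daggerHom, Usl2.lift_uy', unop_op]

lemma dagger_uz : dagger q ha0 (uz F q) = uX F q a := by
  rw [dagger_apply, daggerHom, Usl2.lift_uz, unop_op]

lemma dagger_uZ : dagger q ha0 (uZ F q a) = ux F q := by
  rw [uZ, map_add, map_smul, map_smul, dagger_uz, dagger_uy', ux_eq ha0]

lemma dagger_uX : dagger q ha0 (uX F q a) = uz F q := by
  rw [uX, map_add, map_smul, map_smul, dagger_ux, dagger_uy', uz_eq ha0]

lemma dagger_uA : dagger q ha0 (uA F q a) = uA F q a := by
  conv_lhs => rw [uA]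
  rw [map_add, map_smul, map_smul, dagger_ux, dagger_uz, add_comm, uA_eq ha0]

lemma dagger_involutive : Function.Involutive (dagger q ha0) := by
  intro u
  induction u using Usl2.induction with
  | algebraMap c => rw [dagger_algebraMap, dagger_algebraMap]
  | ux => rw [dagger_ux, dagger_uZ]
  | uy => rw [dagger_uy, dagger_uy]
  | uy' => rw [dagger_uy', dagger_uy']
  | uz => rw [dagger_uz, dagger_uX]
  | add u v hu hv => rw [map_add, map_add, hu, hv]
  | mul u v hu hv => rw [dagger_mul, dagger_mul, hu, hv]

variable (q) in
noncomputable def daggerEquiv : Usl2 F q ≃ₗ[F] Usl2 F q :=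
  LinearEquiv.ofInvolutive (dagger q ha0) (dagger_involutive ha0)

end Dagger

section Uniqueness

variable {F : Type*} [Field F] {q a : F} {d : Usl2 F q →ₗ[F] Usl2 F q}

lemma map_one_of_antimul (hd : ∀ u v, d (u * v) = d v * d u) (hy : d (uy F q) = uy F q)
    (hy' : d (uy' F q) = uy' F q) : d 1 = 1 := by
  conv_lhs => rw [← uy_mul_uy']
  rw [hd, hy, hy', uy'_mul_uy]

lemma qComm_uy_map_ux_of_antimul (hd : ∀ u v, d (u * v) = d v * d u) (hy : d (uy F q) = uy F q)
    (hy' : d (uy' F q) = uy' F q) :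
    qComm q (uy F q) (d (ux F q)) = (q - q⁻¹) • 1 := by
  rw [← hy, ← map_qComm_of_antimul d hd, qComm_ux_uy, map_smul, map_one_of_antimul hd hy hy']

lemma qComm_map_uz_uy_of_antimul (hd : ∀ u v, d (u * v) = d v * d u) (hy : d (uy F q) = uy F q)
    (hy' : d (uy' F q) = uy' F q) :
    qComm q (d (uz F q)) (uy F q) = (q - q⁻¹) • 1 := by
  rw [← hy, ← map_qComm_of_antimul d hd, qComm_uy_uz, map_smul, map_one_of_antimul hd hy hy']

theorem eq_dagger_of_antimul (hq0 : q ≠ 0) (hq4 : q ^ 4 ≠ 1) (ha0 : a ≠ 0)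
    (hd : ∀ u v, d (u * v) = d v * d u) (hy : d (uy F q) = uy F q)
    (hy' : d (uy' F q) = uy' F q) (hA : d (uA F q a) = uA F q a) : d = dagger q ha0 := by
  set w := d (ux F q) - uZ F q a
  have hzX : d (uz F q) - uX F q a = -(a ^ 2)⁻¹ • w := by
    rw [uA, map_add, map_smul, map_smul, ← uA, uA_eq ha0] at hA
    apply smul_right_injective _ ha0
    dsimp only [w]
    rw [smul_smul, show a * -(a ^ 2)⁻¹ = -a⁻¹ by field_simp]
    linear_combination (norm := module) hA
  have hyw : qComm q (uy F q) w = 0 := by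
    rw [qComm_sub_right, qComm_uy_map_ux_of_antimul hd hy hy', qComm_uy_uZ, sub_self]
  have hwy : qComm q w (uy F q) = 0 := by
    have h : qComm q (d (uz F q) - uX F q a) (uy F q) = 0 := by
      rw [qComm_sub_left, qComm_map_uz_uy_of_antimul hd hy hy', qComm_uX_uy, sub_self]
    rw [hzX, qComm_smul_left, smul_eq_zero] at h
    exact h.resolve_left (by simpa using ha0)
  have hx : d (ux F q) = uZ F q a :=
    sub_eq_zero.mp (eq_zero_of_qComm_eq_zero hq0 hq4 isUnit_uy hyw hwy)
  have hz : d (uz F q) = uX F q a := by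
    rwa [show w = 0 from sub_eq_zero.mpr hx, smul_zero, sub_eq_zero] at hzX
  refine Usl2.linearMap_ext_of_antimul hd (dagger_mul ha0) ?_ ?_ ?_ ?_ ?_
  · rw [map_one_of_antimul hd hy hy', dagger_one]
  · rw [hx, dagger_ux]
  · rw [hy, dagger_uy]
  · rw [hy', dagger_uy']
  · rw [hz, dagger_uz]

end Uniqueness

theorem statement17_general (F : Type*) [Field F] (q : F) (hq0 : q ≠ 0) (hq4 : q ^ 4 ≠ 1)
    (a : F) (ha0 : a ≠ 0) :
    (∃! d : Usl2 F q ≃ₗ[F] Usl2 F q,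
      (∀ u v : Usl2 F q, d (u * v) = d v * d u) ∧
      d (uA F q a) = uA F q a ∧ d (uy F q) = uy F q ∧ d (uy' F q) = uy' F q) ∧
    (∀ d : Usl2 F q ≃ₗ[F] Usl2 F q,
      ((∀ u v : Usl2 F q, d (u * v) = d v * d u) ∧
        d (uA F q a) = uA F q a ∧ d (uy F q) = uy F q ∧ d (uy' F q) = uy' F q) →
      d (ux F q) = uZ F q a ∧ d (uz F q) = uX F q a ∧
        ∀ u : Usl2 F q, d (d u) = u) := by
  constructor
  · refine ⟨daggerEquiv q ha0, ⟨dagger_mul ha0, dagger_uA ha0, dagger_uy ha0, dagger_uy' ha0⟩, ?_⟩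
    rintro d ⟨hd, hA, hy, hy'⟩
    exact LinearEquiv.ext (LinearMap.congr_fun (eq_dagger_of_antimul hq0 hq4 ha0 hd hy hy' hA))
  · rintro d ⟨hd, hA, hy, hy'⟩
    have h : ∀ u, d u = dagger q ha0 u :=
      LinearMap.congr_fun (eq_dagger_of_antimul hq0 hq4 ha0 hd hy hy' hA)
    exact ⟨by rw [h, dagger_ux], by rw [h, dagger_uz], fun u => by rw [h, h, dagger_involutive ha0]⟩

/-- **Lemma 8.4.** There exists a unique antiautomorphism `†` of `U_q(sl2)`
(an `𝔽`-linear bijection with `†(uv) = †(v)†(u)`) that fixes each of `A`, `y`, `y⁻¹`;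
it sends `x ↦ Z`, `y^{±1} ↦ y^{±1}`, `z ↦ X`, and satisfies `†² = 1`. -/
theorem statement17 (F : Type*) [Field F] (q : F) (hq0 : q ≠ 0) (hq4 : q ^ 4 ≠ 1)
    (a : F) (ha0 : a ≠ 0) (ha2 : a ^ 2 ≠ 1) :
    (∃! d : Usl2 F q ≃ₗ[F] Usl2 F q,
      (∀ u v : Usl2 F q, d (u * v) = d v * d u) ∧
      d (uA F q a) = uA F q a ∧ d (uy F q) = uy F q ∧ d (uy' F q) = uy' F q) ∧
    (∀ d : Usl2 F q ≃ₗ[F] Usl2 F q,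
      ((∀ u v : Usl2 F q, d (u * v) = d v * d u) ∧
        d (uA F q a) = uA F q a ∧ d (uy F q) = uy F q ∧ d (uy' F q) = uy' F q) →
      d (ux F q) = uZ F q a ∧ d (uz F q) = uX F q a ∧
        ∀ u : Usl2 F q, d (d u) = u) :=
  statement17_general F q hq0 hq4 a ha0

end Paper
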